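/- Define ϕ(x) = Σ_{m=0}^∞ [ -exp(-πx(4m+1)²/4) + 2 exp(-πx(4m+2)²/4) - exp(-πx(4m+3)²/4) ]. Then ϕ(x) < 0 for all x > 0. -/

import Mathlib

noncomputable def phiB (x : ℝ) : ℝ :=
  ∑' m : ℕ,
    (-Real.exp (-Real.pi * x * (4 * (m : ℝ) + 1) ^ 2 / 4)
      + 2 * Real.exp (-Real.pi * x * (4 * (m : ℝ) + 2) ^ 2 / 4)
      - Real.exp (-Real.pi * x * (4 * (m : ℝ) + 3) ^ 2 / 4))

/-!
With `θ(t) = ∑_{n ∈ ℤ} e^{-π t n²}`, sorting the integers by their residue mod 4 gives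
`2 ϕ(x) = 3 θ(x) - 2 θ(4x) - θ(x/4)`, and Jacobi's identity `θ(1/t) = √t θ(t)` turns this into
`ϕ(1/x) = √x ϕ(x)`. For `x ≥ 1` every term of the series is negative, because already
`2 e^{-πx(4m+2)²/4} < e^{-πx(4m+1)²/4}`; the functional equation carries this to `0 < x < 1`.
-/

open Real

theorem Summable.tsum_eq_tsum_even_add_tsum_odd {E : Type*} [AddCommGroup E] [UniformSpace E]
    [IsUniformAddGroup E] [CompleteSpace E] [T2Space E] {f : ℕ → E} (hf : Summable f) :
    ∑' n, f n = ∑' k, f (2 * k) + ∑' k, f (2 * k + 1) :=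
  (tsum_even_add_odd (hf.comp_injective (mul_right_injective₀ two_ne_zero))
    (hf.comp_injective ((add_left_injective 1).comp (mul_right_injective₀ two_ne_zero)))).symm

noncomputable def gaussTerm (t : ℝ) (n : ℕ) : ℝ := exp (-π * t * n ^ 2)

noncomputable def realTheta (t : ℝ) : ℝ := ∑' n : ℤ, exp (-π * t * n ^ 2)

lemma summable_gaussTerm {t : ℝ} (ht : 0 < t) : Summable (gaussTerm t) := by
  have := Real.summable_exp_nat_mul_of_ge (neg_neg_of_pos (mul_pos pi_pos ht))
    (f := fun n : ℕ => (n : ℝ) ^ 2) fun n => by exact_mod_cast Nat.le_self_pow two_ne_zero n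
  exact this.congr fun n => by simp [gaussTerm]

lemma summable_gaussTerm_four_mul_add {t : ℝ} (ht : 0 < t) (r : ℕ) :
    Summable fun m : ℕ => gaussTerm t (4 * m + r) :=
  (summable_gaussTerm ht).comp_injective
    ((add_left_injective r).comp (mul_right_injective₀ four_ne_zero))

lemma gaussTerm_two_mul (t : ℝ) (n : ℕ) : gaussTerm t (2 * n) = gaussTerm (4 * t) n := by
  simp only [gaussTerm]; push_cast; ring_nf

lemma realTheta_eq_two_mul_tsum_gaussTerm_sub_one {t : ℝ} (ht : 0 < t) :
    realTheta t = 2 * ∑' n, gaussTerm t n - 1 := by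
  have hnat : Summable fun n : ℕ => exp (-π * t * n ^ 2) := summable_gaussTerm ht
  have hint : Summable fun n : ℤ => exp (-π * t * n ^ 2) :=
    .of_nat_of_neg (by simpa using hnat) (by simpa using hnat)
  rw [realTheta, tsum_int_eq_zero_add_two_mul_tsum_pnat (fun n => by simp) hint,
    ← tsum_zero_pnat_eq_tsum_nat (summable_gaussTerm ht)]
  simp [gaussTerm]
  ring

theorem realTheta_inv {t : ℝ} (ht : 0 < t) : realTheta t⁻¹ = √t * realTheta t := by
  rw [realTheta, Real.tsum_exp_neg_mul_int_sq (inv_pos.mpr ht), realTheta, sqrt_eq_rpow,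
    inv_rpow ht.le, one_div, inv_inv]
  simp only [div_inv_eq_mul]

lemma phiB_eq_tsum_gaussTerm (x : ℝ) :
    phiB x = ∑' m : ℕ, (-gaussTerm (x / 4) (4 * m + 1) + 2 * gaussTerm (x / 4) (4 * m + 2)
      - gaussTerm (x / 4) (4 * m + 3)) := by
  refine tsum_congr fun m => ?_
  simp only [gaussTerm]
  push_cast
  ring_nf

lemma phiB_eq_realTheta {x : ℝ} (hx : 0 < x) :
    phiB x = (3 * realTheta x - 2 * realTheta (4 * x) - realTheta (x / 4)) / 2 := by
  have hf : Summable (gaussTerm (x / 4)) := summable_gaussTerm (by positivity)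
  have hres := summable_gaussTerm_four_mul_add (t := x / 4) (by positivity)
  have hf_even : ∀ k, gaussTerm (x / 4) (2 * k) = gaussTerm x k := fun k => by
    rw [gaussTerm_two_mul, mul_div_cancel₀ x four_ne_zero]
  have h_all := hf.tsum_eq_tsum_even_add_tsum_odd
  have h_even :=
    (hf.comp_injective (mul_right_injective₀ two_ne_zero)).tsum_eq_tsum_even_add_tsum_odd
  have h_odd := (hf.comp_injective ((add_left_injective 1).comp
    (mul_right_injective₀ two_ne_zero))).tsum_eq_tsum_even_add_tsum_odd
  simp only [Function.comp_def, ← mul_assoc, mul_add, mul_one, add_assoc, Nat.reduceMul,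
    Nat.reduceAdd] at h_all h_even h_odd
  have h_four : ∀ k, gaussTerm (x / 4) (4 * k) = gaussTerm (4 * x) k := fun k => by
    rw [show 4 * k = 2 * (2 * k) by ring, hf_even, gaussTerm_two_mul]
  have h_phiB : phiB x = -∑' m : ℕ, gaussTerm (x / 4) (4 * m + 1)
      + 2 * ∑' m : ℕ, gaussTerm (x / 4) (4 * m + 2) - ∑' m : ℕ, gaussTerm (x / 4) (4 * m + 3) := by
    rw [phiB_eq_tsum_gaussTerm, Summable.tsum_sub ((hres 1).neg.add ((hres 2).mul_left 2)) (hres 3),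
      Summable.tsum_add (hres 1).neg ((hres 2).mul_left 2), tsum_neg, tsum_mul_left]
  simp only [hf_even, h_four] at h_all h_even
  rw [h_phiB, realTheta_eq_two_mul_tsum_gaussTerm_sub_one hx,
    realTheta_eq_two_mul_tsum_gaussTerm_sub_one (by positivity : 0 < 4 * x),
    realTheta_eq_two_mul_tsum_gaussTerm_sub_one (by positivity : 0 < x / 4)]
  linarith

theorem phiB_inv {x : ℝ} (hx : 0 < x) : phiB x⁻¹ = √x * phiB x := by
  have h_sqrt_four : √4 = 2 := by rw [show (4 : ℝ) = 2 ^ 2 by norm_num, sqrt_sq zero_le_two]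
  have h4x : realTheta (x⁻¹ / 4) = 2 * √x * realTheta (4 * x) := by
    rw [show x⁻¹ / 4 = (4 * x)⁻¹ by ring, realTheta_inv (by positivity),
      sqrt_mul zero_le_four, h_sqrt_four]
  have hx4 : realTheta (4 * x⁻¹) = √x / 2 * realTheta (x / 4) := by
    rw [show 4 * x⁻¹ = (x / 4)⁻¹ by ring, realTheta_inv (by positivity), sqrt_div' _ zero_le_four,
      h_sqrt_four]
  rw [phiB_eq_realTheta (inv_pos.mpr hx), phiB_eq_realTheta hx, realTheta_inv hx, h4x, hx4]
  ring

lemma two_mul_gaussTerm_succ_lt {t : ℝ} (ht : 1 / 4 ≤ t) {n : ℕ} (hn : 1 ≤ n) :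
    2 * gaussTerm t (n + 1) < gaussTerm t n := by
  have hn' : (1 : ℝ) ≤ n := by exact_mod_cast hn
  have hgap : 1 + -π * t * ((n + 1 : ℕ) : ℝ) ^ 2 < -π * t * (n : ℝ) ^ 2 := by
    push_cast
    nlinarith [pi_gt_three, mul_le_mul_of_nonneg_left ht pi_pos.le]
  calc 2 * gaussTerm t (n + 1) < exp 1 * gaussTerm t (n + 1) := by
        gcongr
        · exact exp_pos _
        · linarith [add_one_lt_exp (one_ne_zero (α := ℝ))]
    _ = exp (1 + -π * t * ((n + 1 : ℕ) : ℝ) ^ 2) := (exp_add _ _).symm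
    _ < gaussTerm t n := exp_lt_exp.mpr hgap

lemma phiB_neg_of_one_le {x : ℝ} (hx : 1 ≤ x) : phiB x < 0 := by
  have hres := summable_gaussTerm_four_mul_add (t := x / 4) (by positivity)
  have hterm : ∀ m : ℕ, -gaussTerm (x / 4) (4 * m + 1) + 2 * gaussTerm (x / 4) (4 * m + 2)
      - gaussTerm (x / 4) (4 * m + 3) < 0 := fun m => by
    have := two_mul_gaussTerm_succ_lt (by linarith : 1 / 4 ≤ x / 4) (by omega : 1 ≤ 4 * m + 1)
    have : 0 < gaussTerm (x / 4) (4 * m + 3) := exp_pos _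
    linarith
  rw [phiB_eq_tsum_gaussTerm]
  exact (Summable.tsum_lt_tsum (fun m => (hterm m).le) (hterm 0)
    (((hres 1).neg.add ((hres 2).mul_left 2)).sub (hres 3)) summable_zero).trans_eq tsum_zero

/-- `ϕ(x) < 0` for all `x > 0`. -/
theorem phiB_neg (x : ℝ) (hx : 0 < x) : phiB x < 0 := by
  rcases le_or_gt 1 x with h | h
  · exact phiB_neg_of_one_le h
  · have h_inv : 1 ≤ x⁻¹ := (one_le_inv₀ hx).mpr h.le
    rw [← inv_inv x, phiB_inv (inv_pos.mpr hx)]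
    exact mul_neg_of_pos_of_neg (sqrt_pos.mpr (inv_pos.mpr hx)) (phiB_neg_of_one_le h_inv)
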